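/- arXiv:math/0208242 — 4 statements merged into one kernel-verified Lean document; each statement's English description precedes it below -/
import Mathlib

section
/- Let S be an (m+1)×(m+1) symmetric unitary complex matrix with S_{0l} ≠ 0 for all l, and define N_{ij}^k = Σ_{l=0}^m S_{il} S_{jl} conj(S_{lk}) / S_{0l}. Then the bilinear product on ℂ^{m+1} defined on basis vectors by v_i · v_j = Σ_k N_{ij}^k v_k is associative and commutative. -/
open Matrix Finset

theorem stmt_6 (m : ℕ) (S : Matrix (Fin (m + 1)) (Fin (m + 1)) ℂ)
    (hsymm : Sᵀ = S) (hunit : S * Sᴴ = 1) (hne : ∀ l, S 0 l ≠ 0)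
    (N : Fin (m + 1) → Fin (m + 1) → Fin (m + 1) → ℂ)
    (hN : ∀ i j k, N i j k = ∑ l, S i l * S j l * (starRingEnd ℂ) (S l k) / S 0 l) :
    (∀ i j l n, ∑ k, N i j k * N k l n = ∑ k, N j l k * N i k n) ∧
    (∀ i j k, N i j k = N j i k) := by
  have hs : ∀ a b, S a b = S b a := by
    intro a b
    have h := congrFun (congrFun hsymm a) b
    rw [Matrix.transpose_apply] at h
    exact h.symm
  have hcomm : ∀ i j k, N i j k = N j i k := by
    intro i j k
    rw [hN, hN]
    exact Finset.sum_congr rfl fun l _ => by ring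
  have hunit' : Sᴴ * S = 1 := mul_eq_one_comm.mp hunit
  have horth : ∀ p q : Fin (m+1), ∑ k, (starRingEnd ℂ) (S k p) * S k q
      = if p = q then 1 else 0 := by
    intro p q
    have h := congrFun (congrFun hunit' p) q
    simpa [Matrix.mul_apply, Matrix.one_apply, Matrix.conjTranspose_apply] using h
  have key : ∀ i j l n, ∑ k, N i j k * N k l n
      = ∑ q, S i q * S j q * S l q * (starRingEnd ℂ) (S q n) / (S 0 q * S 0 q) := by
    intro i j l n
    simp only [hN]
    calc ∑ k, (∑ q, S i q * S j q * (starRingEnd ℂ) (S q k) / S 0 q) *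
          ∑ p, S k p * S l p * (starRingEnd ℂ) (S p n) / S 0 p
        = ∑ k, ∑ p, ∑ q, (S i q * S j q * (starRingEnd ℂ) (S q k) / S 0 q) *
            (S k p * S l p * (starRingEnd ℂ) (S p n) / S 0 p) := by
          simp only [Finset.sum_mul, Finset.mul_sum]
      _ = ∑ p, ∑ k, ∑ q, (S i q * S j q * (starRingEnd ℂ) (S q k) / S 0 q) *
            (S k p * S l p * (starRingEnd ℂ) (S p n) / S 0 p) := Finset.sum_comm
      _ = ∑ p, ∑ q, ∑ k, (S i q * S j q * (starRingEnd ℂ) (S q k) / S 0 q) *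
            (S k p * S l p * (starRingEnd ℂ) (S p n) / S 0 p) :=
          Finset.sum_congr rfl fun p _ => Finset.sum_comm
      _ = ∑ q, ∑ p, ∑ k, (S i q * S j q * (starRingEnd ℂ) (S q k) / S 0 q) *
            (S k p * S l p * (starRingEnd ℂ) (S p n) / S 0 p) := Finset.sum_comm
      _ = ∑ q, ∑ p, (S i q * S j q / S 0 q * (S l p * (starRingEnd ℂ) (S p n) / S 0 p)) *
            ∑ k, (starRingEnd ℂ) (S k q) * S k p := by
          refine Finset.sum_congr rfl fun q _ => Finset.sum_congr rfl fun p _ => ?_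
          rw [Finset.mul_sum]
          refine Finset.sum_congr rfl fun k _ => ?_
          rw [hs q k]
          ring
      _ = ∑ q, S i q * S j q * S l q * (starRingEnd ℂ) (S q n) / (S 0 q * S 0 q) := by
          simp only [horth, mul_ite, mul_one, mul_zero]
          refine Finset.sum_congr rfl fun q _ => ?_
          rw [Finset.sum_ite_eq, if_pos (Finset.mem_univ q)]
          ring
  refine ⟨fun i j l n => ?_, hcomm⟩
  have h1 : ∑ k, N j l k * N i k n = ∑ k, N j l k * N k i n :=
    Finset.sum_congr rfl fun k _ => by rw [hcomm i k n]
  rw [h1, key i j l n, key j l i n]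
  exact Finset.sum_congr rfl fun q _ => by ring
end

section
/- Let S be an (m+1)×(m+1) symmetric unitary complex matrix with S_{0l} ≠ 0 for all l, let N_{ij}^k = Σ_l S_{il} S_{jl} conj(S_{lk}) / S_{0l} be the fusion structure constants on ℂ^{m+1} with basis {v_i}, and set w_i = S_{0i} Σ_{j=0}^m conj(S_{ji}) v_j for i = 0,…,m. Then the w_i are orthogonal idempotents for the fusion product (w_i · w_j = δ_{ij} w_i) and Σ_{i=0}^m w_i = v_0. -/
/-!
Write `x ↦ x ᵥ* S` for the S-transform. Inserting the Verlinde formula, the fusion product becomes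
`x · y = ((x ᵥ* S) * (y ᵥ* S) / S 0) ᵥ* Sᴴ`: in the S-transformed coordinates it is the pointwise
product, rescaled by the row `S 0`. Since `Sᴴ S = 1`, the vector `w i = Pi.single i (S 0 i) ᵥ* Sᴴ`
transforms to `Pi.single i (S 0 i)`, and these are orthogonal idempotents for the rescaled pointwise
product. Summing, `∑ i, w i = S 0 ᵥ* Sᴴ = (S Sᴴ) 0 = v₀`.
-/

open Matrix Finset

theorem Pi.single_mul_single_div {ι 𝕜 : Type*} [DecidableEq ι] [Semifield 𝕜] (c : ι → 𝕜)
    (i j : ι) (a b : 𝕜) :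
    Pi.single i a * Pi.single j b / c = if i = j then Pi.single i (a * b / c i) else 0 := by
  ext k
  by_cases hk : k = i
  · subst hk
    split_ifs with h <;> simp [h]
  · split_ifs <;> simp [hk]

theorem sum_sum_mul_mul_verlinde_eq_vecMul {ι 𝕜 : Type*} [Fintype ι] [Semifield 𝕜]
    (S T : Matrix ι ι 𝕜) (c x y : ι → 𝕜) (k : ι) :
    ∑ i, ∑ j, x i * y j * ∑ l, S i l * S j l * T l k / c l =
      (((x ᵥ* S) * (y ᵥ* S) / c) ᵥ* T) k := by
  simp only [vecMul, dotProduct, Pi.mul_apply, Pi.div_apply, sum_div, sum_mul, mul_sum]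
  conv_lhs => enter [2, i]; rw [sum_comm]
  rw [sum_comm]
  refine sum_congr rfl fun l _ => ?_
  rw [sum_comm]
  refine sum_congr rfl fun i _ => sum_congr rfl fun j _ => ?_
  ring

theorem stmt_7_general (m : ℕ) (S : Matrix (Fin (m + 1)) (Fin (m + 1)) ℂ)
    (hsymm : Sᵀ = S) (hunit : S * Sᴴ = 1)
    (N : Fin (m + 1) → Fin (m + 1) → Fin (m + 1) → ℂ)
    (hN : ∀ i j k, N i j k = ∑ l, S i l * S j l * (starRingEnd ℂ) (S l k) / S 0 l)
    (mul : (Fin (m + 1) → ℂ) → (Fin (m + 1) → ℂ) → (Fin (m + 1) → ℂ))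
    (hmul : ∀ x y k, mul x y k = ∑ i, ∑ j, x i * y j * N i j k)
    (w : Fin (m + 1) → Fin (m + 1) → ℂ)
    (hw : ∀ i j, w i j = S 0 i * (starRingEnd ℂ) (S j i)) :
    (∀ i j, mul (w i) (w j) = if i = j then w i else 0) ∧
    (∑ i, w i) = Pi.single (0 : Fin (m + 1)) (1 : ℂ) := by
  have hmul_eq : ∀ x y, mul x y = ((x ᵥ* S) * (y ᵥ* S) / S 0) ᵥ* Sᴴ := by
    intro x y
    ext k
    have hN' : ∀ i j, N i j k = ∑ l, S i l * S j l * Sᴴ l k / S 0 l := fun i j => by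
      simp only [hN, conjTranspose_apply, IsSymm.apply hsymm, RCLike.star_def]
    simp only [hmul, hN', sum_sum_mul_mul_verlinde_eq_vecMul]
  have hw_eq : ∀ i, w i = Pi.single i (S 0 i) ᵥ* Sᴴ := fun i => by
    ext j
    simp [hw]
  have hw_vecMul : ∀ i, w i ᵥ* S = Pi.single i (S 0 i) := fun i => by
    rw [hw_eq, vecMul_vecMul, mul_eq_one_comm.mp hunit, vecMul_one]
  refine ⟨fun i j => ?_, ?_⟩
  · rw [hmul_eq, hw_vecMul, hw_vecMul, Pi.single_mul_single_div]
    split_ifs with h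
    · subst h
      rw [mul_self_div_self, hw_eq]
    · exact zero_vecMul _
  · rw [Finset.sum_congr rfl fun i _ => hw_eq i, ← sum_vecMul, univ_sum_single,
      ← mul_apply_eq_vecMul, hunit]
    exact funext fun _ => one_eq_pi_single

theorem stmt_7 (m : ℕ) (S : Matrix (Fin (m + 1)) (Fin (m + 1)) ℂ)
    (hsymm : Sᵀ = S) (hunit : S * Sᴴ = 1) (hne : ∀ l, S 0 l ≠ 0)
    (N : Fin (m + 1) → Fin (m + 1) → Fin (m + 1) → ℂ)
    (hN : ∀ i j k, N i j k = ∑ l, S i l * S j l * (starRingEnd ℂ) (S l k) / S 0 l)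
    (mul : (Fin (m + 1) → ℂ) → (Fin (m + 1) → ℂ) → (Fin (m + 1) → ℂ))
    (hmul : ∀ x y k, mul x y k = ∑ i, ∑ j, x i * y j * N i j k)
    (w : Fin (m + 1) → Fin (m + 1) → ℂ)
    (hw : ∀ i j, w i j = S 0 i * (starRingEnd ℂ) (S j i)) :
    (∀ i j, mul (w i) (w j) = if i = j then w i else 0) ∧
    (∑ i, w i) = Pi.single (0 : Fin (m + 1)) (1 : ℂ) :=
  stmt_7_general m S hsymm hunit N hN mul hmul w hw
end

section
/- Let S be an (m+1)×(m+1) symmetric unitary complex matrix indexed by {0,…,m}, suppose S² is a permutation matrix P with P e₀ = e₀, and suppose S_{0l} ≠ 0 for all l. Define N_{ij}^k = Σ_l S_{il} S_{jl} conj(S_{lk}) / S_{0l}. Then N_{ij}^0 = P_{ij} for all i, j; i.e., N_{ij}^0 = 1 if j = ī (where ī is the index with P v_i = v_{ī}), and N_{ij}^0 = 0 otherwise. -/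
open Matrix Finset

theorem stmt_9 (m : ℕ) (S : Matrix (Fin (m + 1)) (Fin (m + 1)) ℂ)
    (hsymm : Sᵀ = S) (hunit : S * Sᴴ = 1) (hne : ∀ l, S 0 l ≠ 0)
    (σ : Equiv.Perm (Fin (m + 1))) (hperm : S ^ 2 = σ.permMatrix ℂ) (hσ0 : σ 0 = 0)
    (N : Fin (m + 1) → Fin (m + 1) → Fin (m + 1) → ℂ)
    (hN : ∀ i j k, N i j k = ∑ l, S i l * S j l * (starRingEnd ℂ) (S l k) / S 0 l) :
    (∀ i j, N i j 0 = (S ^ 2) i j) ∧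
    (∀ i j, N i j 0 = if j = σ i then 1 else 0) := by
  have hS0 : ∀ l, S l 0 = S 0 l := by
    intro l
    have := congrFun (congrFun hsymm 0) l
    simpa [Matrix.transpose_apply] using this
  have h1 : Sᴴ * σ.permMatrix ℂ = S := by
    rw [← hperm, sq, ← Matrix.mul_assoc, mul_eq_one_comm.mp hunit, Matrix.one_mul]
  have hreal : ∀ l, (starRingEnd ℂ) (S l 0) = S l 0 := by
    intro l
    have h2 := congrFun (congrFun h1 l) 0
    rw [Matrix.mul_apply] at h2
    have h3 : ∀ k, Sᴴ l k * (σ.permMatrix ℂ) k 0 = if k = 0 then Sᴴ l 0 else 0 := by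
      intro k
      simp only [Equiv.Perm.permMatrix, PEquiv.toMatrix_apply, Equiv.toPEquiv_apply,
        Option.mem_def, Option.some_inj]
      by_cases hk : k = 0
      · subst hk; simp [hσ0]
      · have : σ k ≠ 0 := fun h => hk (by simpa [hσ0] using σ.injective (h.trans hσ0.symm))
        simp [this, hk]
    rw [Finset.sum_congr rfl (fun k _ => h3 k), Finset.sum_ite_eq' _ (0 : Fin (m+1))] at h2
    simp only [Finset.mem_univ, if_true] at h2
    rw [Matrix.conjTranspose_apply] at h2
    calc (starRingEnd ℂ) (S l 0) = (starRingEnd ℂ) (S 0 l) := by rw [hS0]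
    _ = S l 0 := h2
  have key : ∀ i j, N i j 0 = (S ^ 2) i j := by
    intro i j
    rw [hN, sq, Matrix.mul_apply]
    apply Finset.sum_congr rfl
    intro l _
    rw [hreal l, hS0 l, mul_div_assoc, div_self (hne l), mul_one]
    congr 1
    exact ((congrFun (congrFun hsymm j) l).symm : S j l = S l j)
  refine ⟨key, fun i j => ?_⟩
  rw [key, hperm]
  simp only [Equiv.Perm.permMatrix, PEquiv.toMatrix_apply, Equiv.toPEquiv_apply,
    Option.mem_def, Option.some_inj]
  by_cases h : j = σ i <;> simp [h, eq_comm]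
end

section
/- Let S be an (m+1)×(m+1) symmetric unitary complex matrix with S_{j0} ≠ 0 for all j, and define J_r(j; i_1,…,i_r) = (Π_{k=1}^r S_{i_k j}) / S_{j0}^{r-1} for r ≥ 1. Then with N_{ab}^c = Σ_l S_{al} S_{bl} conj(S_{lc}) / S_{0l}, for all r ≥ 2 and all indices: Σ_{k=0}^m N_{i_{r-1} i_r}^k · J_{r-1}(j; i_1,…,i_{r-2}, k) = J_r(j; i_1,…,i_r). -/
/-!
The Verlinde formula `∑ₖ N_{ab}^k S_{kj} = S_{aj} S_{bj} / S_{0j}` holds because `N_{ab}` is `Sᴴ`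
applied to the vector `l ↦ S_{al} S_{bl} / S_{0l}`, and (using the symmetry of `S`) summing against
`S_{kj}` applies `S`, which undoes `Sᴴ`. Since `J_r(j; ·)` is multiplicative in its colours,
replacing the last colour `k` by the pair `a, b` multiplies `J` by exactly this factor over `S_{j0}`.
-/

open Matrix Finset

theorem Matrix.IsSymm.sum_sum_mul_star_mul {ι α : Type*} [Fintype ι] [DecidableEq ι]
    [CommSemiring α] [StarRing α] {S : Matrix ι ι α} (hS : S.IsSymm) (hunit : S * Sᴴ = 1)
    (g : ι → α) (j : ι) :
    ∑ k, (∑ l, g l * star (S l k)) * S k j = g j :=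
  calc ∑ k, (∑ l, g l * star (S l k)) * S k j = (S *ᵥ (Sᴴ *ᵥ g)) j := by
        simp only [mulVec, dotProduct, conjTranspose_apply, hS.apply j]
        exact sum_congr rfl fun k _ => by rw [mul_comm, sum_congr rfl fun l _ => mul_comm _ _]
    _ = g j := by rw [mulVec_mulVec, hunit, one_mulVec]

theorem Matrix.IsSymm.sum_verlinde_mul {ι : Type*} [Fintype ι] [DecidableEq ι]
    {S : Matrix ι ι ℂ} (hS : S.IsSymm) (hunit : S * Sᴴ = 1) (o a b j : ι) :
    ∑ k, (∑ l, S a l * S b l * starRingEnd ℂ (S l k) / S o l) * S k j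
      = S a j * S b j / S o j := by
  simpa only [starRingEnd_apply, div_mul_eq_mul_div] using
    hS.sum_sum_mul_star_mul hunit (fun l => S a l * S b l / S o l) j

theorem stmt_16_general (m : ℕ) (S : Matrix (Fin (m + 1)) (Fin (m + 1)) ℂ)
    (hsymm : Sᵀ = S) (hunit : S * Sᴴ = 1)
    (N : Fin (m + 1) → Fin (m + 1) → Fin (m + 1) → ℂ)
    (hN : ∀ a b c, N a b c = ∑ l, S a l * S b l * (starRingEnd ℂ) (S l c) / S 0 l)
    (J : (r : ℕ) → Fin (m + 1) → (Fin r → Fin (m + 1)) → ℂ)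
    (hJ : ∀ (r : ℕ) (j : Fin (m + 1)) (i : Fin r → Fin (m + 1)),
      J r j i = (∏ t, S (i t) j) / (S j 0) ^ (r - 1)) :
    ∀ (n : ℕ) (i : Fin n → Fin (m + 1)) (a b j : Fin (m + 1)),
      ∑ k, N a b k * J (n + 1) j (Fin.snoc i k)
        = J (n + 2) j (Fin.snoc (Fin.snoc i a) b) := by
  intro n i a b j
  have hfusion : ∑ k, N a b k * S k j = S a j * S b j / S j 0 := by
    simpa only [hN, IsSymm.apply hsymm 0 j] using IsSymm.sum_verlinde_mul hsymm hunit 0 a b j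
  simp only [hJ, Fin.prod_univ_castSucc, Fin.snoc_castSucc, Fin.snoc_last, Nat.add_sub_cancel]
  calc ∑ k, N a b k * ((∏ t, S (i t) j) * S k j / S j 0 ^ n)
      = (∏ t, S (i t) j) * (∑ k, N a b k * S k j) / S j 0 ^ n := by
        rw [mul_sum, sum_div]
        exact sum_congr rfl fun k _ => by ring
    _ = (∏ t, S (i t) j) * S a j * S b j / S j 0 ^ (n + 2 - 1) := by
        rw [hfusion, show n + 2 - 1 = n + 1 from rfl]
        ring

theorem stmt_16 (m : ℕ) (S : Matrix (Fin (m + 1)) (Fin (m + 1)) ℂ)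
    (hsymm : Sᵀ = S) (hunit : S * Sᴴ = 1) (hne : ∀ j, S j 0 ≠ 0)
    (N : Fin (m + 1) → Fin (m + 1) → Fin (m + 1) → ℂ)
    (hN : ∀ a b c, N a b c = ∑ l, S a l * S b l * (starRingEnd ℂ) (S l c) / S 0 l)
    (J : (r : ℕ) → Fin (m + 1) → (Fin r → Fin (m + 1)) → ℂ)
    (hJ : ∀ (r : ℕ) (j : Fin (m + 1)) (i : Fin r → Fin (m + 1)),
      J r j i = (∏ t, S (i t) j) / (S j 0) ^ (r - 1)) :
    ∀ (n : ℕ) (i : Fin n → Fin (m + 1)) (a b j : Fin (m + 1)),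
      ∑ k, N a b k * J (n + 1) j (Fin.snoc i k)
        = J (n + 2) j (Fin.snoc (Fin.snoc i a) b) :=
  stmt_16_general m S hsymm hunit N hN J hJ
end
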